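/- arXiv:1801.02889 — 2 statements merged into one kernel-verified Lean document; each statement's English description precedes it below -/
import Mathlib

section
/- Decomposition of the optimal value at an active pair: suppose Z* is Γ-feasible and attains JAM*(U,Λ,d,Γ), let (s₀,c₀) ∈ Γ with v := Z* s₀ c₀ > 0. Then JAM*(U,Λ,d,Γ) = v + JAM*(U', Λ', d', Γ \ {(s₀,c₀)}), where U' equals U except U' s₀ = U s₀ − v, Λ' equals Λ except Λ' c₀ = Λ c₀ − v, and d' equals d except d' s₀ = d s₀ − 1. -/
open scoped Classical

/-- `Z` is a feasible matrix for the restricted joint allocation-matching problem, where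
only pairs in `Γ` may carry positive flow. -/
def JAMFeasibleRestr {n m : ℕ} (U : Fin n → ℝ) (Λ : Fin m → ℝ) (d : Fin n → ℕ)
    (Γ : Set (Fin n × Fin m)) (Z : Fin n → Fin m → ℝ) : Prop :=
  (∀ s c, 0 ≤ Z s c) ∧
  (∀ s, ∑ c, Z s c ≤ U s) ∧
  (∀ c, ∑ s, Z s c ≤ Λ c) ∧
  (∀ s, (Finset.univ.filter fun c => 0 < Z s c).card ≤ d s) ∧
  (∀ s c, (s, c) ∉ Γ → Z s c = 0)

/-- Optimal value `JAM*(U,Λ,d,Γ)` of the restricted problem. -/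
noncomputable def JAMstarRestr {n m : ℕ} (U : Fin n → ℝ) (Λ : Fin m → ℝ) (d : Fin n → ℕ)
    (Γ : Set (Fin n × Fin m)) : ℝ :=
  sSup {v : ℝ | ∃ Z, JAMFeasibleRestr U Λ d Γ Z ∧ v = ∑ s, ∑ c, Z s c}

lemma jam_sum_le {n m : ℕ} {U : Fin n → ℝ} {Λ : Fin m → ℝ} {d : Fin n → ℕ}
    {Γ : Set (Fin n × Fin m)} {Z : Fin n → Fin m → ℝ}
    (h : JAMFeasibleRestr U Λ d Γ Z) : ∑ s, ∑ c, Z s c ≤ ∑ s, U s :=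
  Finset.sum_le_sum fun s _ => h.2.1 s

lemma jam_bdd {n m : ℕ} (U : Fin n → ℝ) (Λ : Fin m → ℝ) (d : Fin n → ℕ)
    (Γ : Set (Fin n × Fin m)) :
    BddAbove {w : ℝ | ∃ Z, JAMFeasibleRestr U Λ d Γ Z ∧ w = ∑ s, ∑ c, Z s c} :=
  ⟨∑ s, U s, fun w hw => by obtain ⟨Z, hZ, rfl⟩ := hw; exact jam_sum_le hZ⟩

lemma jam_zero_feasible {n m : ℕ} {U : Fin n → ℝ} {Λ : Fin m → ℝ} {d : Fin n → ℕ}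
    {Γ : Set (Fin n × Fin m)} (hU : ∀ s, 0 ≤ U s) (hΛ : ∀ c, 0 ≤ Λ c) :
    JAMFeasibleRestr U Λ d Γ (fun _ _ => 0) := by
  refine ⟨fun _ _ => le_refl 0, fun s => by simpa using hU s, fun c => by simpa using hΛ c,
    fun s => by simp, fun _ _ _ => rfl⟩

/-- decomposition of the restricted optimal value at an active pair of an
optimal solution. -/
theorem jam_restricted_decomposition {n m : ℕ} (hn : 0 < n) (hm : 0 < m)
    (U : Fin n → ℝ) (hU : ∀ s, 0 ≤ U s)
    (Λ : Fin m → ℝ) (hΛ : ∀ c, 0 ≤ Λ c)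
    (d : Fin n → ℕ) (Γ : Set (Fin n × Fin m))
    (Zstar : Fin n → Fin m → ℝ) (hZ : JAMFeasibleRestr U Λ d Γ Zstar)
    (hZopt : ∑ s, ∑ c, Zstar s c = JAMstarRestr U Λ d Γ)
    (s₀ : Fin n) (c₀ : Fin m) (hmem : (s₀, c₀) ∈ Γ)
    (v : ℝ) (hv : v = Zstar s₀ c₀) (hvpos : 0 < v) :
    JAMstarRestr U Λ d Γ =
      v + JAMstarRestr (Function.update U s₀ (U s₀ - v))
            (Function.update Λ c₀ (Λ c₀ - v))
            (Function.update d s₀ (d s₀ - 1))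
            (Γ \ {(s₀, c₀)}) := by
  classical
  obtain ⟨hpos, hrow, hcol, hcard, hsupp⟩ := hZ
  set U' := Function.update U s₀ (U s₀ - v) with hU'def
  set Λ' := Function.update Λ c₀ (Λ c₀ - v) with hΛ'def
  set d' := Function.update d s₀ (d s₀ - 1) with hd'def
  set Γ' := Γ \ ({(s₀, c₀)} : Set (Fin n × Fin m)) with hΓ'def
  -- basic bounds
  have hvU : v ≤ U s₀ := by
    rw [hv]
    exact le_trans (Finset.single_le_sum (fun c _ => hpos s₀ c) (Finset.mem_univ c₀)) (hrow s₀)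
  have hvΛ : v ≤ Λ c₀ := by
    rw [hv]
    exact le_trans (Finset.single_le_sum (fun s _ => hpos s c₀) (Finset.mem_univ s₀)) (hcol c₀)
  have hd1 : 1 ≤ d s₀ := by
    have hc : c₀ ∈ Finset.univ.filter fun c => 0 < Zstar s₀ c := by
      simp [← hv, hvpos]
    exact le_trans (Finset.card_pos.mpr ⟨c₀, hc⟩) (hcard s₀)
  have hU'nn : ∀ s, 0 ≤ U' s := by
    intro s
    by_cases h : s = s₀
    · subst h; simp [hU'def, sub_nonneg.mpr hvU]
    · simpa [hU'def, Function.update_of_ne h] using hU s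
  have hΛ'nn : ∀ c, 0 ≤ Λ' c := by
    intro c
    by_cases h : c = c₀
    · subst h; simp [hΛ'def, sub_nonneg.mpr hvΛ]
    · simpa [hΛ'def, Function.update_of_ne h] using hΛ c
  -- the rank-one matrix W
  set W : Fin n → Fin m → ℝ := fun s c => if s = s₀ ∧ c = c₀ then v else 0 with hWdef
  have hWrow : ∀ s, ∑ c, W s c = if s = s₀ then v else 0 := by
    intro s
    by_cases h : s = s₀ <;> simp [hWdef, h]
  have hWcol : ∀ c, ∑ s, W s c = if c = c₀ then v else 0 := by
    intro c
    by_cases h : c = c₀ <;> simp [hWdef, h]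
  have hWsum : ∑ s, ∑ c, W s c = v := by
    simp [hWrow]
  -- sets
  set S := {w : ℝ | ∃ Z, JAMFeasibleRestr U Λ d Γ Z ∧ w = ∑ s, ∑ c, Z s c} with hSdef
  set S' := {w : ℝ | ∃ Z, JAMFeasibleRestr U' Λ' d' Γ' Z ∧ w = ∑ s, ∑ c, Z s c} with hS'def
  have hA : JAMstarRestr U Λ d Γ = sSup S := rfl
  have hB : JAMstarRestr U' Λ' d' Γ' = sSup S' := rfl
  have hS'ne : S'.Nonempty := by
    refine ⟨0, fun _ _ => 0, jam_zero_feasible hU'nn hΛ'nn, by simp⟩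
  -- direction 1: lifting a Γ'-feasible matrix
  have hlift : ∀ x ∈ S', v + x ∈ S := by
    rintro x ⟨Z', ⟨h1, h2, h3, h4, h5⟩, rfl⟩
    refine ⟨fun s c => Z' s c + W s c, ⟨?_, ?_, ?_, ?_, ?_⟩, ?_⟩
    · intro s c
      have : 0 ≤ W s c := by by_cases h : s = s₀ ∧ c = c₀ <;> simp [hWdef, h, hvpos.le]
      exact add_nonneg (h1 s c) this
    · intro s
      rw [Finset.sum_add_distrib, hWrow]
      by_cases h : s = s₀
      · rw [h]
        have := h2 s₀
        simp only [hU'def, Function.update_self] at this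
        simp only [if_pos rfl, if_true]
        linarith
      · have := h2 s
        simp only [hU'def, Function.update_of_ne h] at this
        simp [h, this]
    · intro c
      rw [Finset.sum_add_distrib, hWcol]
      by_cases h : c = c₀
      · rw [h]
        have := h3 c₀
        simp only [hΛ'def, Function.update_self] at this
        simp only [if_pos rfl, if_true]
        linarith
      · have := h3 c
        simp only [hΛ'def, Function.update_of_ne h] at this
        simp [h, this]
    · intro s
      by_cases h : s = s₀
      · rw [h]
        have hZ'c₀ : Z' s₀ c₀ = 0 := h5 s₀ c₀ (by simp [hΓ'def])
        have hsub : (Finset.univ.filter fun c => 0 < Z' s₀ c + W s₀ c)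
            ⊆ insert c₀ (Finset.univ.filter fun c => 0 < Z' s₀ c) := by
          intro c hc
          simp only [Finset.mem_filter, Finset.mem_univ, true_and] at hc
          by_cases hcc : c = c₀
          · simp [hcc]
          · simp only [hWdef, hcc, and_false, if_false, add_zero] at hc
            simp [hc, hcc]
        have := h4 s₀
        simp only [hd'def, Function.update_self] at this
        calc (Finset.univ.filter fun c => 0 < Z' s₀ c + W s₀ c).card
            ≤ (insert c₀ (Finset.univ.filter fun c => 0 < Z' s₀ c)).card :=
              Finset.card_le_card hsub
          _ ≤ (Finset.univ.filter fun c => 0 < Z' s₀ c).card + 1 :=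
              Finset.card_insert_le _ _
          _ ≤ (d s₀ - 1) + 1 := by omega
          _ = d s₀ := by omega
      · have heq : ∀ c, Z' s c + W s c = Z' s c := by
          intro c; simp [hWdef, h]
        have := h4 s
        simp only [hd'def, Function.update_of_ne h] at this
        simpa [heq] using this
    · intro s c hsc
      have h1' : (s, c) ∉ Γ' := by
        simp only [hΓ'def, Set.mem_diff]
        tauto
      have h2' : ¬(s = s₀ ∧ c = c₀) := by
        rintro ⟨rfl, rfl⟩; exact hsc hmem
      simp [h5 s c h1', hWdef, h2']
    · rw [show (∑ s, ∑ c, (Z' s c + W s c)) = (∑ s, ∑ c, Z' s c) + ∑ s, ∑ c, W s c by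
        simp [Finset.sum_add_distrib], hWsum]
      ring
  -- direction 2: Zstar minus W is Γ'-feasible
  have hZW : ∀ s c, 0 ≤ Zstar s c - W s c := by
    intro s c
    by_cases h : s = s₀ ∧ c = c₀
    · obtain ⟨rfl, rfl⟩ := h; simp [hWdef, hv]
    · simpa [hWdef, h] using hpos s c
  have hstar' : (∑ s, ∑ c, Zstar s c) - v ∈ S' := by
    refine ⟨fun s c => Zstar s c - W s c, ⟨hZW, ?_, ?_, ?_, ?_⟩, ?_⟩
    · intro s
      rw [Finset.sum_sub_distrib, hWrow]
      by_cases h : s = s₀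
      · rw [h]
        simp only [hU'def, Function.update_self, if_pos rfl, if_true]
        linarith [hrow s₀]
      · simpa [hU'def, Function.update_of_ne h, h] using hrow s
    · intro c
      rw [Finset.sum_sub_distrib, hWcol]
      by_cases h : c = c₀
      · rw [h]
        simp only [hΛ'def, Function.update_self, if_pos rfl, if_true]
        linarith [hcol c₀]
      · simpa [hΛ'def, Function.update_of_ne h, h] using hcol c
    · intro s
      by_cases h : s = s₀
      · rw [h]
        have hsub : (Finset.univ.filter fun c => 0 < Zstar s₀ c - W s₀ c)
            ⊆ (Finset.univ.filter fun c => 0 < Zstar s₀ c).erase c₀ := by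
          intro c hc
          simp only [Finset.mem_filter, Finset.mem_univ, true_and] at hc
          by_cases hcc : c = c₀
          · rw [hcc] at hc
            simp [hWdef, hv] at hc
          · simp only [hWdef, hcc, and_false, if_false, sub_zero] at hc
            simp [Finset.mem_erase, hcc, hc]
        have hc₀mem : c₀ ∈ Finset.univ.filter fun c => 0 < Zstar s₀ c := by
          simp [← hv, hvpos]
        calc (Finset.univ.filter fun c => 0 < Zstar s₀ c - W s₀ c).card
            ≤ ((Finset.univ.filter fun c => 0 < Zstar s₀ c).erase c₀).card :=
              Finset.card_le_card hsub
          _ = (Finset.univ.filter fun c => 0 < Zstar s₀ c).card - 1 :=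
              Finset.card_erase_of_mem hc₀mem
          _ ≤ d s₀ - 1 := Nat.sub_le_sub_right (hcard s₀) 1
          _ = d' s₀ := by simp [hd'def]
      · have heq : ∀ c, Zstar s c - W s c = Zstar s c := by
          intro c; simp [hWdef, h]
        simpa [heq, hd'def, Function.update_of_ne h] using hcard s
    · intro s c hsc
      by_cases h : (s, c) = (s₀, c₀)
      · obtain ⟨h1, h2⟩ := Prod.mk.injEq .. ▸ h
        rw [h1, h2]
        simp [hWdef, hv]
      · have : (s, c) ∉ Γ := by
          intro hmem'
          exact hsc (by simp [hΓ'def, hmem', h])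
        have h2' : ¬(s = s₀ ∧ c = c₀) := by
          rintro ⟨rfl, rfl⟩; exact h rfl
        simp [hsupp s c this, hWdef, h2']
    · rw [show (∑ s, ∑ c, (Zstar s c - W s c)) = (∑ s, ∑ c, Zstar s c) - ∑ s, ∑ c, W s c by
        simp [Finset.sum_sub_distrib], hWsum]
  -- conclude
  have hbddS := jam_bdd U Λ d Γ
  have hbddS' := jam_bdd U' Λ' d' Γ'
  rw [hA, hB]
  apply le_antisymm
  · have h1 : (∑ s, ∑ c, Zstar s c) - v ≤ sSup S' := le_csSup hbddS' hstar'
    have h2 : ∑ s, ∑ c, Zstar s c = sSup S := by rw [hZopt, hA]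
    linarith
  · have : sSup S' ≤ sSup S - v := by
      apply csSup_le hS'ne
      intro x hx
      have := le_csSup hbddS (hlift x hx)
      linarith
    linarith
end

section
/- Squared distance between solutions of a one-sided Lipschitz differential inclusion is nonincreasing: let F : ℝ → Set ℝ satisfy (z₁ − z₂)·(w₁ − w₂) ≤ 0 for all reals w₁, w₂ and all z₁ ∈ F(w₁), z₂ ∈ F(w₂). Suppose y₁, y₂ : ℝ → ℝ are locally Lipschitz on [0,∞) and for almost every t ≥ 0 each yᵢ is differentiable at t with derivative lying in F(yᵢ(t)). Then the function t ↦ (y₁(t) − y₂(t))² is nonincreasing on [0,∞). -/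
/-! On every interval `[a, b] ⊆ [0, ∞)` the difference `y₁ - y₂` is Lipschitz, hence absolutely
continuous, and so is its square. Almost everywhere both `yᵢ` solve the inclusion, and there the
square has derivative `2 (y₁ - y₂)(z₁ - z₂) ≤ 0`; the fundamental theorem of calculus for absolutely
continuous functions turns this a.e. sign condition into monotonicity. -/

open MeasureTheory Set

theorem LocallyLipschitzOn.absolutelyContinuousOnInterval {X : Type*} [PseudoMetricSpace X]
    {f : ℝ → X} {s : Set ℝ} {a b : ℝ} (hf : LocallyLipschitzOn s f) (hab : uIcc a b ⊆ s) :
    AbsolutelyContinuousOnInterval f a b :=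
  let ⟨_, hK⟩ := (hf.mono hab).exists_lipschitzOnWith_of_compact isCompact_uIcc
  hK.absolutelyContinuousOnInterval

theorem AbsolutelyContinuousOnInterval.le_of_ae_deriv_nonpos {f : ℝ → ℝ} {a b : ℝ}
    (hf : AbsolutelyContinuousOnInterval f a b) (hab : a ≤ b)
    (hf' : ∀ᵐ x, x ∈ Icc a b → deriv f x ≤ 0) : f b ≤ f a := by
  have hint : 0 ≤ ∫ x in a..b, -deriv f x := by
    refine intervalIntegral.integral_nonneg_of_ae_restrict hab ?_
    filter_upwards [ae_restrict_of_ae hf', ae_restrict_mem measurableSet_Icc] with x hx hmem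
    simpa using hx hmem
  rw [intervalIntegral.integral_neg, hf.integral_deriv_eq_sub] at hint
  linarith

theorem antitoneOn_of_ae_deriv_nonpos {f : ℝ → ℝ} {s : Set ℝ} [s.OrdConnected]
    (hf : ∀ a ∈ s, ∀ b ∈ s, AbsolutelyContinuousOnInterval f a b)
    (hf' : ∀ᵐ x, x ∈ s → deriv f x ≤ 0) : AntitoneOn f s := by
  intro a ha b hb hab
  refine (hf a ha b hb).le_of_ae_deriv_nonpos hab ?_
  filter_upwards [hf'] with x hx hmem
  exact hx (Set.Icc_subset s ha hb hmem)

/-- the squared distance between two locally Lipschitz solutions of a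
one-sided Lipschitz (with constant 0) differential inclusion `y' ∈ F(y)` is nonincreasing
on `[0,∞)`. -/
theorem di_osl_sq_dist_antitone (F : ℝ → Set ℝ)
    (hF : ∀ w₁ w₂ z₁ z₂ : ℝ, z₁ ∈ F w₁ → z₂ ∈ F w₂ → (z₁ - z₂) * (w₁ - w₂) ≤ 0)
    (y₁ y₂ : ℝ → ℝ)
    (hy₁ : LocallyLipschitzOn (Set.Ici 0) y₁)
    (hy₂ : LocallyLipschitzOn (Set.Ici 0) y₂)
    (hd₁ : ∀ᵐ t ∂(volume.restrict (Set.Ici (0 : ℝ))), ∃ z ∈ F (y₁ t), HasDerivAt y₁ z t)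
    (hd₂ : ∀ᵐ t ∂(volume.restrict (Set.Ici (0 : ℝ))), ∃ z ∈ F (y₂ t), HasDerivAt y₂ z t) :
    AntitoneOn (fun t => (y₁ t - y₂ t) ^ 2) (Set.Ici 0) := by
  have hac : ∀ a ∈ Ici (0 : ℝ), ∀ b ∈ Ici (0 : ℝ),
      AbsolutelyContinuousOnInterval (y₁ - y₂) a b := fun a ha b hb =>
    (hy₁.sub hy₂).absolutelyContinuousOnInterval (ordConnected_Ici.uIcc_subset ha hb)
  refine antitoneOn_of_ae_deriv_nonpos
    (fun a ha b hb => by simpa [sq] using (hac a ha b hb).fun_mul (hac a ha b hb)) ?_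
  filter_upwards [ae_imp_of_ae_restrict hd₁, ae_imp_of_ae_restrict hd₂] with t h₁ h₂ ht
  obtain ⟨z₁, hz₁, hy₁'⟩ := h₁ ht
  obtain ⟨z₂, hz₂, hy₂'⟩ := h₂ ht
  have hsq := (hy₁'.fun_sub hy₂').fun_pow 2
  simp only [Nat.cast_ofNat, Nat.add_one_sub_one, pow_one] at hsq
  rw [hsq.deriv]
  linarith [hF _ _ _ _ hz₁ hz₂]
end
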